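/- Let p > 1 and q satisfy 1/p + 1/q = 1. Let X_1, ..., X_M be identically distributed nonnegative real random variables with E[X_1^p] < ∞, and let X_(1) ≤ ... ≤ X_(M) denote their order statistics. Then for any subset A ⊆ {1,...,M} with |A| = m, we have E[∑_{j∈A} X_(j)] ≤ (E[X_1^p])^{1/p} · M^{1/p} · m^{1/q}. -/

import Mathlib

/-!
Sorting is a permutation, so pointwise the sum of the order statistics indexed by `A` is a sum of
`#A` of the original values. Hölder's inequality against the constant `1` bounds it by
`(∑ᵢ Xᵢ^p)^(1/p) · #A^(1/q)`, and Jensen's inequality for the concave map `t ↦ t^(1/p)` bounds the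
expectation of `(∑ᵢ Xᵢ^p)^(1/p)` by `(M · E[X₁^p])^(1/p)`.
-/

open MeasureTheory ProbabilityTheory Finset

/-- Order statistics of a finite family of random variables, defined pointwise
by sorting the sample values. -/
noncomputable def orderStat {Ω : Type*} {M : ℕ} (X : Fin M → Ω → ℝ) (j : Fin M) (ω : Ω) : ℝ :=
  X (Tuple.sort (fun i => X i ω) j) ω

section Finite

variable {ι κ : Type*} {p q : ℝ}

lemma sum_le_rpow_sum_rpow_mul_card_rpow (hpq : p.HolderConjugate q) (s : Finset ι) {f : ι → ℝ}
    (hf : ∀ i ∈ s, 0 ≤ f i) :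
    ∑ i ∈ s, f i ≤ (∑ i ∈ s, f i ^ p) ^ (1 / p) * (#s : ℝ) ^ (1 / q) := by
  simpa using Real.inner_le_Lp_mul_Lq_of_nonneg s hpq hf (fun _ _ => zero_le_one)

lemma sum_comp_le_rpow_sum_rpow_mul_card_rpow [Fintype ι] (hpq : p.HolderConjugate q)
    {f : ι → ℝ} (hf : ∀ i, 0 ≤ f i) {e : κ → ι} (he : e.Injective) (s : Finset κ) :
    ∑ j ∈ s, f (e j) ≤ (∑ i, f i ^ p) ^ (1 / p) * (#s : ℝ) ^ (1 / q) := by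
  have hsum : ∑ i ∈ s.map ⟨e, he⟩, f i ^ p ≤ ∑ i, f i ^ p :=
    sum_le_sum_of_subset_of_nonneg (subset_univ _) fun i _ _ => Real.rpow_nonneg (hf i) p
  calc ∑ j ∈ s, f (e j) = ∑ i ∈ s.map ⟨e, he⟩, f i := (sum_map s ⟨e, he⟩ f).symm
    _ ≤ (∑ i ∈ s.map ⟨e, he⟩, f i ^ p) ^ (1 / p) * (#(s.map ⟨e, he⟩) : ℝ) ^ (1 / q) :=
      sum_le_rpow_sum_rpow_mul_card_rpow hpq _ fun i _ => hf i
    _ ≤ (∑ i, f i ^ p) ^ (1 / p) * (#s : ℝ) ^ (1 / q) := by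
      rw [card_map]
      gcongr ?_ * _
      exact Real.rpow_le_rpow (sum_nonneg fun i _ => Real.rpow_nonneg (hf i) p) hsum
        hpq.one_div_nonneg

lemma sum_orderStat_le {Ω : Type*} {M : ℕ} (hpq : p.HolderConjugate q) {X : Fin M → Ω → ℝ}
    (hX : ∀ i ω, 0 ≤ X i ω) (A : Finset (Fin M)) (ω : Ω) :
    ∑ j ∈ A, orderStat X j ω ≤ (∑ i, X i ω ^ p) ^ (1 / p) * (#A : ℝ) ^ (1 / q) :=
  sum_comp_le_rpow_sum_rpow_mul_card_rpow hpq (fun i => hX i ω) (Tuple.sort _).injective A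

end Finite

section Integral

variable {Ω : Type*} [MeasurableSpace Ω] {μ : Measure Ω}

lemma integral_sum_eq_card_mul_of_identDistrib {ι : Type*} [Fintype ι] {Y : ι → Ω → ℝ}
    {Z : Ω → ℝ} (hY : ∀ i, IdentDistrib (Y i) Z μ μ) (hZ : Integrable Z μ) :
    ∫ ω, ∑ i, Y i ω ∂μ = Fintype.card ι * ∫ ω, Z ω ∂μ := by
  rw [integral_finsetSum _ fun i _ => (hY i).integrable_iff.mpr hZ]
  simp [fun i => (hY i).integral_eq]

lemma MeasureTheory.Integrable.rpow_of_le_one [IsFiniteMeasure μ] {f : Ω → ℝ} (hf0 : 0 ≤ᵐ[μ] f)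
    (hf : Integrable f μ) {r : ℝ} (hr0 : 0 ≤ r) (hr1 : r ≤ 1) :
    Integrable (fun ω => f ω ^ r) μ := by
  have hLp := (memLp_one_iff_integrable.mpr hf).norm_rpow_div (ENNReal.ofReal r)
  refine (hLp.integrable ?_).congr ?_
  · rw [one_div]
    exact ENNReal.one_le_inv.mpr (ENNReal.ofReal_le_one.mpr hr1)
  · filter_upwards [hf0] with ω hω
    rw [Real.norm_of_nonneg hω, ENNReal.toReal_ofReal hr0]

lemma integral_rpow_le_rpow_integral [IsProbabilityMeasure μ] {f : Ω → ℝ} (hf0 : 0 ≤ᵐ[μ] f)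
    (hf : Integrable f μ) {r : ℝ} (hr0 : 0 ≤ r) (hr1 : r ≤ 1) :
    ∫ ω, f ω ^ r ∂μ ≤ (∫ ω, f ω ∂μ) ^ r :=
  (Real.concaveOn_rpow hr0 hr1).le_map_integral (Real.continuous_rpow_const hr0).continuousOn
    isClosed_Ici hf0 hf (hf.rpow_of_le_one hf0 hr0 hr1)

end Integral

/-- For identically distributed nonnegative random variables with finite
`p`-th moment (`p > 1`, `1/p + 1/q = 1`), the expected sum of the order statistics
indexed by a set `A` of size `m` is at most `‖X₁‖_p · M^{1/p} · m^{1/q}`. -/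
theorem trimmed_sum_expectation_bound
    {Ω : Type*} [MeasurableSpace Ω] (μ : Measure Ω) [IsProbabilityMeasure μ]
    {M : ℕ} (hM : 0 < M) (X : Fin M → Ω → ℝ)
    (hmeas : ∀ i, Measurable (X i))
    (hnonneg : ∀ i ω, 0 ≤ X i ω)
    (hident : ∀ i, μ.map (X i) = μ.map (X ⟨0, hM⟩))
    (p q : ℝ) (hp : 1 < p) (hpq : 1 / p + 1 / q = 1)
    (hmom : Integrable (fun ω => X ⟨0, hM⟩ ω ^ p) μ)
    (A : Finset (Fin M)) :
    (∫ ω, ∑ j ∈ A, orderStat X j ω ∂μ) ≤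
      (∫ ω, X ⟨0, hM⟩ ω ^ p ∂μ) ^ (1 / p) * (M : ℝ) ^ (1 / p) * (A.card : ℝ) ^ (1 / q) := by
  have hpq' : p.HolderConjugate q := Real.holderConjugate_iff.mpr ⟨hp, by simpa using hpq⟩
  set X₀ := X ⟨0, hM⟩
  have hid : ∀ i, IdentDistrib (fun ω => X i ω ^ p) (fun ω => X₀ ω ^ p) μ μ := fun i =>
    IdentDistrib.comp (u := fun x => x ^ p)
      ⟨(hmeas i).aemeasurable, (hmeas _).aemeasurable, hident i⟩ (by fun_prop)
  have hXp : ∀ i ω, 0 ≤ X i ω ^ p := fun i ω => Real.rpow_nonneg (hnonneg i ω) p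
  set S : Ω → ℝ := fun ω => ∑ i, X i ω ^ p
  have hS0 : 0 ≤ᵐ[μ] S := ae_of_all _ fun ω => sum_nonneg fun i _ => hXp i ω
  have hS : Integrable S μ := integrable_finsetSum _ fun i _ => (hid i).integrable_iff.mpr hmom
  have hES : ∫ ω, S ω ∂μ = M * ∫ ω, X₀ ω ^ p ∂μ := by
    simpa using integral_sum_eq_card_mul_of_identDistrib hid hmom
  have h1p₀ : 0 ≤ 1 / p := hpq'.one_div_nonneg
  have h1p₁ : 1 / p ≤ 1 := (div_le_one (by linarith)).mpr hp.le
  calc ∫ ω, ∑ j ∈ A, orderStat X j ω ∂μ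
      ≤ ∫ ω, S ω ^ (1 / p) * (#A : ℝ) ^ (1 / q) ∂μ :=
        integral_mono_of_nonneg (ae_of_all _ fun ω => sum_nonneg fun j _ => hnonneg _ ω)
          ((hS.rpow_of_le_one hS0 h1p₀ h1p₁).mul_const _)
          (ae_of_all _ (sum_orderStat_le hpq' hnonneg A))
    _ = (∫ ω, S ω ^ (1 / p) ∂μ) * (#A : ℝ) ^ (1 / q) := integral_mul_const _ _
    _ ≤ (∫ ω, S ω ∂μ) ^ (1 / p) * (#A : ℝ) ^ (1 / q) := by
        gcongr
        exact integral_rpow_le_rpow_integral hS0 hS h1p₀ h1p₁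
    _ = (∫ ω, X₀ ω ^ p ∂μ) ^ (1 / p) * (M : ℝ) ^ (1 / p) * (#A : ℝ) ^ (1 / q) := by
        rw [hES, Real.mul_rpow M.cast_nonneg (integral_nonneg (hXp _)), mul_comm ((M : ℝ) ^ _)]
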